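/- Let η ≥ 0, N ≥ 1, and l₁, …, l_N ∈ [0, 1]. Let z ∈ Δ(N) and define z′ ∈ Δ(N) by z′(i) = e^{−η·lᵢ}·z(i) / Σ_{j=1}^N e^{−η·lⱼ}·z(j). Then ‖z − z′‖ ≤ η. -/

import Mathlib

/-!
Reweighting by `exp (-η lᵢ) ∈ [exp (-η), 1]` and renormalising by a constant that also lies in
`[exp (-η), 1]` can shrink each coordinate by a factor of at most `exp (-η)`. Since `z` and `z′`
have the same total mass, the total-variation distance is the total mass lost by the shrinking
coordinates, hence at most `1 - exp (-η) ≤ η`.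
-/

/-- Total-variation distance between two points of the simplex,
    ‖z − z′‖ = (1/2)·Σᵢ |zᵢ − z′ᵢ|. -/
noncomputable def tv {N : ℕ} (z z' : Fin N → ℝ) : ℝ := (1/2) * ∑ i, |z i - z' i|

open Finset

section Reweighting

variable {ι : Type*} [Fintype ι]

lemma sum_abs_eq_two_mul_sum_posPart {x : ι → ℝ} (hx : ∑ i, x i = 0) :
    ∑ i, |x i| = 2 * ∑ i, (x i)⁺ := by
  have habs : ∀ i, |x i| = 2 * (x i)⁺ - x i := fun i => by
    linarith [posPart_add_negPart (x i), posPart_sub_negPart (x i)]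
  simp only [habs, sum_sub_distrib, hx, ← mul_sum, sub_zero]

lemma half_sum_abs_le_of_sum_eq_zero {x c : ι → ℝ} (hx : ∑ i, x i = 0)
    (hxc : ∀ i, x i ≤ c i) (hc : ∀ i, 0 ≤ c i) :
    (1 / 2) * ∑ i, |x i| ≤ ∑ i, c i := by
  rw [sum_abs_eq_two_mul_sum_posPart hx, ← mul_assoc, one_div_mul_cancel two_ne_zero, one_mul]
  exact sum_le_sum fun i _ => sup_le (hxc i) (hc i)

lemma sum_mul_mem_Icc_of_mem_stdSimplex {z w : ι → ℝ} {m : ℝ}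
    (hz : z ∈ stdSimplex ℝ ι) (hw : ∀ i, w i ∈ Set.Icc m 1) :
    ∑ i, w i * z i ∈ Set.Icc m 1 := by
  obtain ⟨hz0, hz1⟩ := hz
  constructor
  · calc m = ∑ i, m * z i := by rw [← mul_sum, hz1, mul_one]
      _ ≤ ∑ i, w i * z i := sum_le_sum fun i _ => mul_le_mul_of_nonneg_right (hw i).1 (hz0 i)
  · calc ∑ i, w i * z i ≤ ∑ i, z i :=
          sum_le_sum fun i _ => mul_le_of_le_one_left (hz0 i) (hw i).2
      _ = 1 := hz1

lemma half_sum_abs_sub_reweight_le {z w : ι → ℝ} {m : ℝ} (hm : 0 < m)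
    (hz : z ∈ stdSimplex ℝ ι) (hw : ∀ i, w i ∈ Set.Icc m 1) :
    (1 / 2) * ∑ i, |z i - w i * z i / ∑ j, w j * z j| ≤ 1 - m := by
  obtain ⟨hW_ge, hW_le⟩ := sum_mul_mem_Icc_of_mem_stdSimplex hz hw
  set W := ∑ j, w j * z j
  have hW_pos : 0 < W := hm.trans_le hW_ge
  obtain ⟨hz0, hz1⟩ := hz
  have hsum : ∑ i, (z i - w i * z i / W) = 0 := by
    rw [sum_sub_distrib, ← sum_div, div_self hW_pos.ne', hz1, sub_self]
  have hshrink : ∀ i, z i - w i * z i / W ≤ (1 - m) * z i := fun i => by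
    have : m * z i ≤ w i * z i / W := by
      rw [le_div_iff₀ hW_pos]
      calc m * z i * W ≤ m * z i := mul_le_of_le_one_right (mul_nonneg hm.le (hz0 i)) hW_le
        _ ≤ w i * z i := mul_le_mul_of_nonneg_right (hw i).1 (hz0 i)
    linarith
  calc (1 / 2) * ∑ i, |z i - w i * z i / W|
      ≤ ∑ i, (1 - m) * z i :=
        half_sum_abs_le_of_sum_eq_zero hsum hshrink fun i => mul_nonneg (by linarith) (hz0 i)
    _ = 1 - m := by rw [← mul_sum, hz1, mul_one]

end Reweighting

theorem stmt_10_general (N : ℕ) (η : ℝ) (hη : 0 ≤ η)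
    (l : Fin N → ℝ) (hl : ∀ i, l i ∈ Set.Icc (0:ℝ) 1)
    (z : Fin N → ℝ) (hz : z ∈ stdSimplex ℝ (Fin N)) :
    tv z (fun i => Real.exp (-η * l i) * z i /
        ∑ j, Real.exp (-η * l j) * z j) ≤ η := by
  have hw : ∀ i, Real.exp (-η * l i) ∈ Set.Icc (Real.exp (-η)) 1 := fun i => by
    obtain ⟨hl0, hl1⟩ := hl i
    exact ⟨Real.exp_le_exp.2 (by nlinarith), Real.exp_le_one_iff.2 (by nlinarith)⟩
  calc tv z _ ≤ 1 - Real.exp (-η) := half_sum_abs_sub_reweight_le (Real.exp_pos _) hz hw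
    _ ≤ η := by linarith [Real.add_one_le_exp (-η)]

theorem stmt_10 (N : ℕ) (hN : 1 ≤ N) (η : ℝ) (hη : 0 ≤ η)
    (l : Fin N → ℝ) (hl : ∀ i, l i ∈ Set.Icc (0:ℝ) 1)
    (z : Fin N → ℝ) (hz : z ∈ stdSimplex ℝ (Fin N)) :
    tv z (fun i => Real.exp (-η * l i) * z i /
        ∑ j, Real.exp (-η * l j) * z j) ≤ η :=
  stmt_10_general N η hη l hl z hz
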